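/- Let ρ₀ ∈ P and let f ∈ L¹(Ω) be nonnegative with all level sets {x ∈ Ω : f(x) = c} of Lebesgue measure zero. Then there exists ρ₁ ∈ P such that ∫_Ω ρ₁ f dx ≤ ∫_Ω ρ₀ f dx, and moreover ρ₁ can be taken of the form c₁χ_{D̂₁} + ⋯ + c_m χ_{D̂_m} where D̂₁, …, D̂_m are pairwise disjoint measurable sets obtained from the super-level sets of f, with |D̂_i| = S_i and ⋃_{i=1}^m D̂_i = Ω. -/

import Mathlib

/-!
Since the level sets of `f` are null, `t ↦ |{x ∈ Ω | t ≤ f x}|` is continuous, so by the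
intermediate value theorem there are thresholds whose superlevel sets in `Ω` have measures
`S₁, S₁ + S₂, …`; their successive differences are sets `D̂ᵢ` on which `f` decreases with `i`.
The step function `ρ₁ = ∑ cᵢ χ_{D̂ᵢ}` has the distribution of `ρ₀`, and since `c` increases,
each superlevel set `{t ≤ ρ₁}` is a sublevel set of `f` in `Ω`. By the bathtub principle it
carries at most the `f`-mass of `{t ≤ ρ₀}`, a set of the same measure, and integrating over `t`
(layer cake for the measure `f dx` on `Ω`) gives `∫ ρ₁ f ≤ ∫ ρ₀ f`.
-/

open MeasureTheory Set Topology
open Filter (Tendsto)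
open scoped ENNReal

variable {X : Type*}

section Chain

variable {A : ℕ → Set X} {m : ℕ}

theorem Monotone.pairwise_disjoint_sdiff_succ (hA : Monotone A) :
    Pairwise (Function.onFun Disjoint fun i : Fin m => A (i + 1) \ A i) := by
  intro i j hij
  wlog hlt : i < j generalizing i j
  · exact (this hij.symm (hij.symm.lt_of_le (not_lt.1 hlt))).symm
  exact disjoint_sdiff_right.mono_left (sdiff_subset.trans (hA (Nat.succ_le_of_lt hlt)))

theorem Monotone.iUnion_fin_sdiff_succ (hA : Monotone A) :
    ⋃ i : Fin m, (A (i + 1) \ A i) = A m \ A 0 := by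
  ext x
  simp only [mem_iUnion, Set.mem_sdiff]
  constructor
  · rintro ⟨i, hx, hx'⟩
    exact ⟨hA i.isLt hx, fun h => hx' (hA (Nat.zero_le _) h)⟩
  · rintro ⟨hxm, hx0⟩
    obtain ⟨n, hn, hn1⟩ := Nat.exists_not_and_succ_of_not_zero_of_exists
      (p := fun k => x ∈ A k) hx0 ⟨m, hxm⟩
    exact ⟨⟨n, lt_of_not_ge fun h => hn (hA h hxm)⟩, hn1, hn⟩

theorem biUnion_lt_succ_sdiff {D : Fin m → Set X} (hD : Pairwise (Function.onFun Disjoint D))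
    (i : Fin m) :
    (⋃ j ∈ {j : Fin m | (j : ℕ) < i + 1}, D j) \ ⋃ j ∈ {j : Fin m | (j : ℕ) < i}, D j = D i := by
  ext x
  simp only [Set.mem_sdiff, mem_iUnion₂, mem_ofPred_eq, exists_prop]
  refine ⟨fun ⟨⟨j, hj, hxj⟩, hx⟩ => ?_, fun hx => ⟨⟨i, Nat.lt_succ_self _, hx⟩, ?_⟩⟩
  · have hji : ¬(j : ℕ) < i := fun h => hx ⟨j, h, hxj⟩
    obtain rfl : j = i := Fin.ext (by omega)
    exact hxj
  · rintro ⟨j, hj, hxj⟩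
    exact disjoint_left.1 (hD (Fin.ne_of_lt hj)) hxj hx

end Chain

section SuperlevelChain

def superlevelChain (Ω : Set X) (f : X → ℝ) (m : ℕ) (s : ℕ → ℝ) (k : ℕ) : Set X :=
  if k = 0 then ∅ else if k < m then {x ∈ Ω | s k ≤ f x} else Ω

variable {Ω : Set X} {f : X → ℝ} {m k : ℕ} {s : ℕ → ℝ}

@[simp]
theorem superlevelChain_zero : superlevelChain Ω f m s 0 = ∅ := rfl

theorem superlevelChain_of_lt (h₀ : 0 < k) (hm : k < m) :
    superlevelChain Ω f m s k = {x ∈ Ω | s k ≤ f x} := by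
  simp [superlevelChain, h₀.ne', hm]

theorem superlevelChain_of_le (h₀ : 0 < k) (hm : m ≤ k) : superlevelChain Ω f m s k = Ω := by
  simp [superlevelChain, h₀.ne', hm.not_gt]

theorem superlevelChain_subset : superlevelChain Ω f m s k ⊆ Ω := by
  unfold superlevelChain
  split_ifs
  exacts [empty_subset _, sep_subset _ _, subset_rfl]

theorem le_of_mem_superlevelChain {x y : X} (hy : y ∈ superlevelChain Ω f m s k)
    (hx : x ∈ Ω \ superlevelChain Ω f m s k) : f x ≤ f y := by
  rcases Nat.eq_zero_or_pos k with rfl | h₀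
  · simp at hy
  rcases lt_or_ge k m with hm | hm
  · rw [superlevelChain_of_lt h₀ hm] at hy hx
    exact (lt_of_not_ge fun h => hx.2 ⟨hx.1, h⟩).le.trans hy.2
  · rw [superlevelChain_of_le h₀ hm] at hx
    exact absurd hx.1 hx.2

theorem monotone_superlevelChain (hs : ∀ k, 0 < k → k + 1 < m → s (k + 1) ≤ s k) :
    Monotone (superlevelChain Ω f m s) := by
  refine monotone_nat_of_le_succ fun k => ?_
  rcases Nat.eq_zero_or_pos k with rfl | h₀
  · simp
  rcases lt_or_ge (k + 1) m with hm | hm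
  · rw [superlevelChain_of_lt h₀ (by omega), superlevelChain_of_lt (by omega) hm]
    exact fun x hx => ⟨hx.1, (hs k h₀ hm).trans hx.2⟩
  · rw [superlevelChain_of_le (by omega) hm]
    exact superlevelChain_subset

end SuperlevelChain

section StepFunction

variable {ι : Type*} [Fintype ι] {Ω : Set X} {c : ι → ℝ} {E : ι → Set X}

theorem sum_indicator_eq_of_mem (hE_disj : Pairwise (Function.onFun Disjoint E)) {x : X} {i : ι}
    (hx : x ∈ E i) : ∑ j, (E j).indicator (fun _ => c j) x = c i := by
  rw [Finset.sum_eq_single i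
    (fun j _ hji => indicator_of_notMem (fun hxj => disjoint_left.1 (hE_disj hji) hxj hx) _)
    (fun h => absurd (Finset.mem_univ i) h), indicator_of_mem hx]

theorem sep_le_sum_indicator_eq_biUnion (hE_disj : Pairwise (Function.onFun Disjoint E))
    (hE_union : ⋃ i, E i = Ω) (r : ℝ) :
    {x ∈ Ω | r ≤ ∑ i, (E i).indicator (fun _ => c i) x} = ⋃ i ∈ {i | r ≤ c i}, E i := by
  ext x
  simp only [mem_ofPred_eq, mem_iUnion₂, exists_prop]
  constructor
  · rintro ⟨hx, hr⟩
    obtain ⟨i, hi⟩ := mem_iUnion.1 (hE_union ▸ hx)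
    exact ⟨i, (sum_indicator_eq_of_mem (c := c) hE_disj hi).symm ▸ hr, hi⟩
  · rintro ⟨i, hr, hi⟩
    exact ⟨hE_union ▸ mem_iUnion_of_mem i hi,
      (sum_indicator_eq_of_mem (c := c) hE_disj hi).symm ▸ hr⟩

theorem measure_sep_le_sum_indicator [MeasurableSpace X] {μ : Measure X}
    (hE_meas : ∀ i, MeasurableSet (E i)) (hE_disj : Pairwise (Function.onFun Disjoint E))
    (hE_union : ⋃ i, E i = Ω) (r : ℝ) :
    μ {x ∈ Ω | r ≤ ∑ i, (E i).indicator (fun _ => c i) x} = ∑' i : {i | r ≤ c i}, μ (E i) := by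
  rw [sep_le_sum_indicator_eq_biUnion hE_disj hE_union,
    measure_biUnion (to_countable _) (hE_disj.set_pairwise _) fun i _ => hE_meas i]

end StepFunction

variable [MeasurableSpace X] {μ : Measure X}

section Superlevel

variable {f : X → ℝ}

theorem continuous_measureReal_le [IsFiniteMeasure μ] (hf : Measurable f)
    (h_level : ∀ a, μ {x | f x = a} = 0) : Continuous fun t => μ.real {x | t ≤ f x} := by
  refine continuous_iff_continuousAt.2 fun a => Metric.continuousAt_iff.2 fun ε hε => ?_
  have h_near : Tendsto (fun δ => μ {x | |f x - a| ≤ δ}) (𝓝[>] 0) (𝓝 0) := by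
    have h := tendsto_measure_biInter_gt (μ := μ) (s := fun δ : ℝ => {x | |f x - a| ≤ δ})
      (a := 0) (fun _ _ => (measurableSet_le (by fun_prop) measurable_const).nullMeasurableSet)
      (fun _ _ _ hij _ hx => hx.trans hij) ⟨1, one_pos, measure_ne_top _ _⟩
    have h_inter : ⋂ δ > (0 : ℝ), {x | |f x - a| ≤ δ} = {x | f x = a} := by
      ext x
      simp only [mem_iInter, mem_ofPred_eq]
      refine ⟨fun h => ?_, fun h δ hδ => by simp [h, hδ.le]⟩
      exact sub_eq_zero.1 <| abs_nonpos_iff.1 <|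
        le_of_forall_pos_le_add fun δ hδ => by simpa using h δ hδ
    rwa [h_inter, h_level] at h
  obtain ⟨δ, hδ_lt, hδ⟩ := ((h_near.eventually (gt_mem_nhds (ENNReal.ofReal_pos.2 hε))).and
    self_mem_nhdsWithin).exists
  refine ⟨δ, hδ, fun t ht => ?_⟩
  obtain ⟨ht₁, ht₂⟩ := abs_lt.1 (Real.dist_eq t a ▸ ht)
  have h_dist : dist (μ.real {x | t ≤ f x}) (μ.real {x | a ≤ f x}) ≤
      μ.real {x | |f x - a| ≤ δ} := by
    rw [Real.dist_eq, abs_sub_le_iff]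
    constructor <;>
      refine (le_measureReal_sdiff (measure_ne_top _ _)).trans (measureReal_mono ?_) <;>
      rintro x ⟨h₁, h₂⟩ <;> simp only [mem_ofPred_eq, not_le] at h₁ h₂ ⊢ <;>
      exact abs_le.2 ⟨by linarith, by linarith⟩
  exact h_dist.trans_lt (ENNReal.toReal_lt_of_lt_ofReal hδ_lt)

theorem exists_measure_le_eq [IsFiniteMeasure μ] (hf : Measurable f)
    (h_level : ∀ a, μ {x | f x = a} = 0) {T : ℝ≥0∞} (hT₀ : 0 < T) (hT : T < μ univ) :
    ∃ t, μ {x | t ≤ f x} = T := by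
  have h_anti : Antitone fun t : ℝ => {x | t ≤ f x} := fun _ _ hst _ hx => hst.trans hx
  have h_top : Tendsto (fun t => μ {x | t ≤ f x}) Filter.atTop (𝓝 0) := by
    have h := tendsto_measure_iInter_atTop (μ := μ)
      (fun _ => (measurableSet_le measurable_const hf).nullMeasurableSet) h_anti
      ⟨0, measure_ne_top _ _⟩
    rwa [iInter_eq_empty_iff.2 fun x => ⟨f x + 1, by simp⟩, measure_empty] at h
  have h_bot : Tendsto (fun t => μ {x | t ≤ f x}) Filter.atBot (𝓝 (μ univ)) := by
    have h := tendsto_measure_iUnion_atBot (μ := μ) h_anti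
    rwa [iUnion_eq_univ_iff.2 fun x => ⟨f x, le_refl (f x)⟩] at h
  obtain ⟨t₁, ht₁⟩ := (h_top.eventually (gt_mem_nhds hT₀)).exists
  obtain ⟨t₂, ht₂⟩ := (h_bot.eventually (lt_mem_nhds hT)).exists
  obtain ⟨t, ht⟩ := mem_range_of_exists_le_of_exists_ge (continuous_measureReal_le hf h_level)
    ⟨t₁, ENNReal.toReal_mono hT.ne_top ht₁.le⟩
    ⟨t₂, ENNReal.toReal_mono (measure_ne_top _ _) ht₂.le⟩
  exact ⟨t, (ENNReal.toReal_eq_toReal_iff' (measure_ne_top _ _) hT.ne_top).1 ht⟩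

theorem exists_measure_sep_le_eq {Ω : Set X} (hΩ_fin : μ Ω ≠ ∞) (hf : Measurable f)
    (h_level : ∀ a, μ {x ∈ Ω | f x = a} = 0) {T : ℝ≥0∞} (hT₀ : 0 < T) (hT : T < μ Ω) :
    ∃ t, μ {x ∈ Ω | t ≤ f x} = T := by
  have : IsFiniteMeasure (μ.restrict Ω) := isFiniteMeasure_restrict.2 hΩ_fin
  have h_level' : ∀ a, μ.restrict Ω {x | f x = a} = 0 := fun a => by
    rw [Measure.restrict_apply (measurableSet_eq_fun hf measurable_const), inter_comm]
    exact h_level a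
  obtain ⟨t, ht⟩ := exists_measure_le_eq hf h_level' hT₀ (by rwa [Measure.restrict_apply_univ])
  rw [Measure.restrict_apply (measurableSet_le measurable_const hf), inter_comm] at ht
  exact ⟨t, ht⟩

theorem le_of_measure_sep_le_lt {Ω : Set X} {t t' : ℝ}
    (h : μ {x ∈ Ω | t ≤ f x} < μ {x ∈ Ω | t' ≤ f x}) : t' ≤ t :=
  not_lt.1 fun htt' => h.not_ge <| measure_mono (μ := μ) fun _ hx => ⟨hx.1, htt'.le.trans hx.2⟩

theorem measurableSet_superlevelChain {Ω : Set X} {m k : ℕ} {s : ℕ → ℝ} (hΩ : MeasurableSet Ω)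
    (hf : Measurable f) :
    MeasurableSet (superlevelChain Ω f m s k) := by
  unfold superlevelChain
  split_ifs
  exacts [MeasurableSet.empty, hΩ.inter (measurableSet_le measurable_const hf), hΩ]

theorem exists_superlevel_chain {Ω : Set X} {m : ℕ} {U : ℕ → Set X} (hΩ_fin : μ Ω ≠ ∞)
    (hf : Measurable f) (h_level : ∀ a, μ {x ∈ Ω | f x = a} = 0)
    (hU : Monotone U) (hU₀ : U 0 = ∅) (hUm : U m = Ω)
    (hU_lt : ∀ k < m, μ (U k) < μ (U (k + 1))) :
    ∃ s : ℕ → ℝ, Monotone (superlevelChain Ω f m s) ∧ superlevelChain Ω f m s m = Ω ∧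
      ∀ k ≤ m, μ (superlevelChain Ω f m s k) = μ (U k) := by
  have h_threshold : ∀ k, ∃ t, 0 < k → k < m → μ {x ∈ Ω | t ≤ f x} = μ (U k) := by
    intro k
    by_cases hk : 0 < k ∧ k < m
    · obtain ⟨t, ht⟩ := exists_measure_sep_le_eq hΩ_fin hf h_level
        (by simpa [hU₀] using (hU_lt 0 (hk.1.trans hk.2)).trans_le (measure_mono (hU hk.1)))
        (hUm ▸ (hU_lt k hk.2).trans_le (measure_mono (hU hk.2)))
      exact ⟨t, fun _ _ => ht⟩
    · exact ⟨0, fun h₀ hm => absurd ⟨h₀, hm⟩ hk⟩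
  choose s hs using h_threshold
  refine ⟨s, monotone_superlevelChain fun k h₀ hm =>
    le_of_measure_sep_le_lt (μ := μ) (Ω := Ω) (f := f) ?_, ?_, ?_⟩
  · rw [hs k h₀ (by omega), hs (k + 1) (by omega) hm]
    exact hU_lt k (by omega)
  · rcases Nat.eq_zero_or_pos m with rfl | h₀
    · simp [← hUm, hU₀]
    · exact superlevelChain_of_le h₀ le_rfl
  · intro k hk
    rcases Nat.eq_zero_or_pos k with rfl | h₀
    · simp [hU₀]
    rcases hk.lt_or_eq with hm | rfl
    · rw [superlevelChain_of_lt h₀ hm, hs k h₀ hm]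
    · rw [superlevelChain_of_le h₀ le_rfl, hUm]

theorem exists_superlevel_partition {Ω : Set X} {m : ℕ} (hΩ : MeasurableSet Ω)
    (hΩ_fin : μ Ω ≠ ∞) (hf : Measurable f) (h_level : ∀ a, μ {x ∈ Ω | f x = a} = 0)
    {D : Fin m → Set X} (hD_meas : ∀ i, MeasurableSet (D i))
    (hD_disj : Pairwise (Function.onFun Disjoint D)) (hD_union : ⋃ i, D i = Ω)
    (hD_pos : ∀ i, μ (D i) ≠ 0) :
    ∃ Dhat : Fin m → Set X, (∀ i, MeasurableSet (Dhat i)) ∧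
      Pairwise (Function.onFun Disjoint Dhat) ∧ (∀ i, μ (Dhat i) = μ (D i)) ∧
      ⋃ i, Dhat i = Ω ∧ ∀ i j : Fin m, i < j → ∀ y ∈ Dhat i, ∀ x ∈ Dhat j, f x ≤ f y := by
  let U : ℕ → Set X := fun k => ⋃ i ∈ {i : Fin m | (i : ℕ) < k}, D i
  have hU_meas : ∀ k, MeasurableSet (U k) := fun k =>
    MeasurableSet.biUnion (to_countable _) fun i _ => hD_meas i
  have hU_mono : Monotone U := fun k k' hk =>
    biUnion_subset_biUnion_left fun i (hi : (i : ℕ) < k) => hi.trans_le hk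
  have hUm : U m = Ω := by simp [U, hD_union]
  have hU_fin : ∀ k, μ (U k) ≠ ∞ := fun k =>
    measure_ne_top_of_subset (hD_union ▸ iUnion₂_subset fun i _ => subset_iUnion D i) hΩ_fin
  have hU_succ : ∀ i : Fin m, U (i + 1) \ U i = D i := biUnion_lt_succ_sdiff hD_disj
  have hU_lt : ∀ k < m, μ (U k) < μ (U (k + 1)) := by
    intro k hk
    rw [← union_eq_right.2 (hU_mono k.le_succ), ← measure_add_sdiff (hU_meas k).nullMeasurableSet,
      hU_succ ⟨k, hk⟩]
    exact ENNReal.lt_add_right (hU_fin k) (hD_pos _)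
  obtain ⟨s, hA_mono, hAm, hA_measure⟩ :=
    exists_superlevel_chain hΩ_fin hf h_level hU_mono (by simp [U]) hUm hU_lt
  have hA_meas : ∀ k, MeasurableSet (superlevelChain Ω f m s k) := fun _ =>
    measurableSet_superlevelChain hΩ hf
  refine ⟨fun i => superlevelChain Ω f m s (i + 1) \ superlevelChain Ω f m s i,
    fun i => (hA_meas _).diff (hA_meas _), hA_mono.pairwise_disjoint_sdiff_succ, fun i => ?_,
    by rw [hA_mono.iUnion_fin_sdiff_succ, hAm, superlevelChain_zero, sdiff_empty],
    fun i j hij y hy x hx => le_of_mem_superlevelChain hy.1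
      ⟨superlevelChain_subset hx.1, fun h => hx.2 (hA_mono (Nat.succ_le_of_lt hij) h)⟩⟩
  rw [measure_sdiff (hA_mono i.val.le_succ) (hA_meas _).nullMeasurableSet
      (measure_ne_top_of_subset superlevelChain_subset hΩ_fin),
    hA_measure _ i.isLt, hA_measure _ i.isLt.le, ← hU_succ i,
    measure_sdiff (hU_mono i.val.le_succ) (hU_meas _).nullMeasurableSet (hU_fin _)]

end Superlevel

theorem setLIntegral_le_setLIntegral_of_measure_eq {F : X → ℝ≥0∞} {B E : Set X}
    (hB : MeasurableSet B) (hE : MeasurableSet E) (hμ : μ B = μ E) (hB_fin : μ B ≠ ∞)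
    (hBE : ∀ x ∈ B \ E, ∀ y ∈ E \ B, F x ≤ F y) :
    ∫⁻ x in B, F x ∂μ ≤ ∫⁻ x in E, F x ∂μ := by
  have hsdiff : μ (B \ E) = μ (E \ B) := measure_sdiff_symm hB.nullMeasurableSet
    hE.nullMeasurableSet hμ (measure_ne_top_of_subset inter_subset_left hB_fin)
  rw [← lintegral_inter_add_sdiff F B hE, ← lintegral_inter_add_sdiff F E hB, inter_comm]
  gcongr _ + ?_
  calc ∫⁻ x in B \ E, F x ∂μ ≤ (⨆ x ∈ B \ E, F x) * μ (B \ E) :=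
        setLIntegral_le_iSup_mul F (hB.diff hE)
    _ ≤ (⨅ y ∈ E \ B, F y) * μ (E \ B) := by
        rw [hsdiff]
        gcongr
        exact iSup₂_le fun x hx => le_iInf₂ fun y hy => hBE x hx y hy
    _ ≤ ∫⁻ y in E \ B, F y ∂μ := iInf_mul_le_setLIntegral F (hE.diff hB)

section Rearrangement

variable {Ω : Set X} {g ρ : X → ℝ}

theorem ae_restrict_le_of_measure_sep_eq (hΩ : MeasurableSet Ω) (hΩ_fin : μ Ω ≠ ∞)
    (hρ : Measurable ρ) {r : ℝ} (h : μ {x ∈ Ω | r ≤ ρ x} = μ Ω) :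
    ∀ᵐ x ∂μ.restrict Ω, r ≤ ρ x := by
  rw [ae_restrict_iff' hΩ, ae_iff]
  have hsep : {x | ¬(x ∈ Ω → r ≤ ρ x)} = Ω \ {x ∈ Ω | r ≤ ρ x} := by
    ext x; simp
  have hm : MeasurableSet {x ∈ Ω | r ≤ ρ x} := hΩ.inter (measurableSet_le measurable_const hρ)
  rw [hsep, measure_sdiff (sep_subset Ω _) hm.nullMeasurableSet
    (measure_ne_top_of_subset (sep_subset Ω _) hΩ_fin), h, tsub_self]

theorem ae_restrict_lt_of_measure_sep_eq_zero (hΩ : MeasurableSet Ω) {r : ℝ}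
    (h : μ {x ∈ Ω | r ≤ ρ x} = 0) : ∀ᵐ x ∂μ.restrict Ω, ρ x < r := by
  rw [ae_restrict_iff' hΩ, ae_iff]
  exact measure_mono_null (fun x hx => by simpa using hx) h

theorem setLIntegral_mul_le_of_equimeasurable {F : X → ℝ≥0∞} (hF : Measurable F)
    (hΩ : MeasurableSet Ω) (hΩ_fin : μ Ω ≠ ∞)
    (hg : Measurable g) (hg_nonneg : ∀ x ∈ Ω, 0 ≤ g x)
    (hρ : Measurable ρ) (hρ_nonneg : ∀ᵐ x ∂μ.restrict Ω, 0 ≤ ρ x)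
    (hρg : ∀ r, μ {x ∈ Ω | r ≤ ρ x} = μ {x ∈ Ω | r ≤ g x})
    (hgF : ∀ x ∈ Ω, ∀ y ∈ Ω, g x < g y → F y ≤ F x) :
    ∫⁻ x in Ω, F x * ENNReal.ofReal (g x) ∂μ ≤ ∫⁻ x in Ω, F x * ENNReal.ofReal (ρ x) ∂μ := by
  set ν := (μ.restrict Ω).withDensity F
  have hν_ac : ν ≪ μ.restrict Ω := withDensity_absolutelyContinuous _ F
  have hsuperlevel : ∀ t : ℝ, ν {x | t ≤ g x} ≤ ν {x | t ≤ ρ x} := by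
    intro t
    have hg_t : MeasurableSet {x | t ≤ g x} := measurableSet_le measurable_const hg
    have hρ_t : MeasurableSet {x | t ≤ ρ x} := measurableSet_le measurable_const hρ
    rw [withDensity_apply _ hg_t, withDensity_apply _ hρ_t, Measure.restrict_restrict hg_t,
      Measure.restrict_restrict hρ_t]
    refine setLIntegral_le_setLIntegral_of_measure_eq (hg_t.inter hΩ) (hρ_t.inter hΩ)
      (by rw [inter_comm, inter_comm _ Ω]; exact (hρg t).symm)
      (measure_ne_top_of_subset inter_subset_right hΩ_fin) ?_
    rintro x ⟨⟨hx, hxΩ⟩, -⟩ y ⟨⟨-, hyΩ⟩, hy⟩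
    exact hgF y hyΩ x hxΩ ((lt_of_not_ge fun h => hy ⟨h, hyΩ⟩).trans_le hx)
  have hν : ∀ h : X → ℝ, Measurable h →
      ∫⁻ x in Ω, F x * ENNReal.ofReal (h x) ∂μ = ∫⁻ x, ENNReal.ofReal (h x) ∂ν :=
    fun h hh => (lintegral_withDensity_eq_lintegral_mul _ hF hh.ennreal_ofReal).symm
  rw [hν g hg, hν ρ hρ,
    lintegral_eq_lintegral_meas_le ν (hν_ac.ae_le (ae_restrict_of_forall_mem hΩ hg_nonneg))
      hg.aemeasurable,
    lintegral_eq_lintegral_meas_le ν (hν_ac.ae_le hρ_nonneg) hρ.aemeasurable]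
  exact lintegral_mono hsuperlevel

theorem setIntegral_mul_le_of_equimeasurable {f : X → ℝ} {M : ℝ}
    (hΩ : MeasurableSet Ω) (hΩ_fin : μ Ω ≠ ∞)
    (hf : Measurable f) (hf_int : IntegrableOn f Ω μ) (hf_nonneg : ∀ x ∈ Ω, 0 ≤ f x)
    (hg : Measurable g) (hg_nonneg : ∀ x ∈ Ω, 0 ≤ g x) (hg_le : ∀ x ∈ Ω, g x ≤ M)
    (hρ : Measurable ρ) (hρg : ∀ r, μ {x ∈ Ω | r ≤ ρ x} = μ {x ∈ Ω | r ≤ g x})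
    (hgf : ∀ x ∈ Ω, ∀ y ∈ Ω, g x < g y → f y ≤ f x) :
    ∫ x in Ω, g x * f x ∂μ ≤ ∫ x in Ω, ρ x * f x ∂μ := by
  have hρ_nonneg : ∀ᵐ x ∂μ.restrict Ω, 0 ≤ ρ x := ae_restrict_le_of_measure_sep_eq hΩ hΩ_fin hρ
    (by rw [hρg, sep_eq_self_iff_mem_true.2 hg_nonneg])
  have hρ_lt : ∀ᵐ x ∂μ.restrict Ω, ρ x < M + 1 := ae_restrict_lt_of_measure_sep_eq_zero hΩ
    (by rw [hρg, sep_eq_empty_iff_mem_false.2 fun x hx => by linarith [hg_le x hx],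
      measure_empty])
  have hf_nonneg_ae : ∀ᵐ x ∂μ.restrict Ω, 0 ≤ f x := ae_restrict_of_forall_mem hΩ hf_nonneg
  have h_integral_eq : ∀ h : X → ℝ, Measurable h → (∀ᵐ x ∂μ.restrict Ω, 0 ≤ h x) →
      ∫ x in Ω, h x * f x ∂μ =
        (∫⁻ x in Ω, ENNReal.ofReal (f x) * ENNReal.ofReal (h x) ∂μ).toReal := by
    intro h hh h_nonneg
    rw [integral_eq_lintegral_of_nonneg_ae (f := fun x => h x * f x)
      (by filter_upwards [h_nonneg, hf_nonneg_ae] with x using mul_nonneg)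
      (hh.mul hf).aestronglyMeasurable]
    congr 1
    refine lintegral_congr_ae ?_
    filter_upwards [h_nonneg] with x hx
    rw [ENNReal.ofReal_mul hx, mul_comm]
  have hρ_fin : ∫⁻ x in Ω, ENNReal.ofReal (f x) * ENNReal.ofReal (ρ x) ∂μ ≠ ∞ := by
    refine ne_top_of_le_ne_top (hf_int.const_mul (M + 1)).lintegral_lt_top.ne
      (lintegral_mono_ae ?_)
    filter_upwards [hρ_nonneg, hρ_lt, hf_nonneg_ae] with x hρx hρM hfx
    rw [← ENNReal.ofReal_mul hfx, mul_comm]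
    gcongr
  rw [h_integral_eq g hg (ae_restrict_of_forall_mem hΩ hg_nonneg), h_integral_eq ρ hρ hρ_nonneg]
  exact ENNReal.toReal_mono hρ_fin <| setLIntegral_mul_le_of_equimeasurable
    hf.ennreal_ofReal hΩ hΩ_fin hg hg_nonneg hρ hρ_nonneg hρg
    fun x hx y hy hxy => ENNReal.ofReal_le_ofReal (hgf x hx y hy hxy)

end Rearrangement

/-- For any `ρ₀` in the rearrangement class `P` generated by a step
function, and any nonnegative `f ∈ L¹(Ω)` whose level sets are null, there is
`ρ₁ ∈ P` with `∫_Ω ρ₁ f ≤ ∫_Ω ρ₀ f`; moreover `ρ₁` can be taken to be a step function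
`∑ i, c i • χ_{D̂ i}` on a measurable partition `D̂` of `Ω` with `|D̂ i| = S i`, built from
the super-level sets of `f` (so that `f` is larger on `D̂ i` than on `D̂ j` for `i < j`). -/
theorem stmt14 {N m : ℕ}
    (Ω : Set (EuclideanSpace ℝ (Fin N)))
    (hΩ_meas : MeasurableSet Ω) (hΩ_bd : Bornology.IsBounded Ω)
    (c : Fin m → ℝ) (hc_pos : ∀ i, 0 < c i) (hc_mono : StrictMono c)
    (S : Fin m → ℝ) (hS_pos : ∀ i, 0 < S i)
    (D : Fin m → Set (EuclideanSpace ℝ (Fin N)))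
    (hD_meas : ∀ i, MeasurableSet (D i))
    (hD_disj : Pairwise (Function.onFun Disjoint D))
    (hD_union : (⋃ i, D i) = Ω)
    (hD_vol : ∀ i, volume (D i) = ENNReal.ofReal (S i))
    (ρ₀ : EuclideanSpace ℝ (Fin N) → ℝ) (hρ₀_meas : Measurable ρ₀)
    (hρ₀_mem : ∀ r : ℝ, volume {x ∈ Ω | r ≤ ρ₀ x} =
      volume {x ∈ Ω | r ≤ ∑ i, (D i).indicator (fun _ => c i) x})
    (f : EuclideanSpace ℝ (Fin N) → ℝ) (hf_meas : Measurable f)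
    (hf_int : IntegrableOn f Ω) (hf_nonneg : ∀ x ∈ Ω, 0 ≤ f x)
    (hf_level : ∀ a : ℝ, volume {x ∈ Ω | f x = a} = 0) :
    ∃ Dhat : Fin m → Set (EuclideanSpace ℝ (Fin N)),
      (∀ i, MeasurableSet (Dhat i)) ∧
      Pairwise (Function.onFun Disjoint Dhat) ∧
      (∀ i, volume (Dhat i) = ENNReal.ofReal (S i)) ∧
      (⋃ i, Dhat i) = Ω ∧
      (∀ i j : Fin m, i < j → ∀ y ∈ Dhat i, ∀ x ∈ Dhat j, f x ≤ f y) ∧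
      (∀ r : ℝ,
        volume {x ∈ Ω | r ≤ ∑ i, (Dhat i).indicator (fun _ => c i) x} =
          volume {x ∈ Ω | r ≤ ∑ i, (D i).indicator (fun _ => c i) x}) ∧
      (∫ x in Ω, (∑ i, (Dhat i).indicator (fun _ => c i) x) * f x) ≤
        ∫ x in Ω, ρ₀ x * f x := by
  have hΩ_fin : volume Ω ≠ ∞ := hΩ_bd.measure_lt_top.ne
  obtain ⟨Dhat, hDhat_meas, hDhat_disj, hDhat_vol, hDhat_union, hDhat_order⟩ :=
    exists_superlevel_partition hΩ_meas hΩ_fin hf_meas hf_level hD_meas hD_disj hD_union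
      fun i => by simp [hD_vol, hS_pos i]
  have hdist : ∀ r : ℝ,
      volume {x ∈ Ω | r ≤ ∑ i, (Dhat i).indicator (fun _ => c i) x} =
        volume {x ∈ Ω | r ≤ ∑ i, (D i).indicator (fun _ => c i) x} := fun r => by
    simp only [measure_sep_le_sum_indicator hDhat_meas hDhat_disj hDhat_union,
      measure_sep_le_sum_indicator hD_meas hD_disj hD_union, hDhat_vol]
  refine ⟨Dhat, hDhat_meas, hDhat_disj, fun i => (hDhat_vol i).trans (hD_vol i), hDhat_union,
    hDhat_order, hdist, ?_⟩
  refine setIntegral_mul_le_of_equimeasurable (M := ∑ i, c i) hΩ_meas hΩ_fin hf_meas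
    hf_int hf_nonneg (Finset.measurable_sum _ fun i _ => measurable_const.indicator (hDhat_meas i))
    (fun x _ => Finset.sum_nonneg fun i _ => indicator_nonneg (fun _ _ => (hc_pos i).le) x)
    (fun x _ => Finset.sum_le_sum fun i _ => indicator_le_self' (fun _ _ => (hc_pos i).le) x)
    hρ₀_meas (fun r => (hρ₀_mem r).trans (hdist r).symm) fun x hx y hy hxy => ?_
  obtain ⟨i, hi⟩ := mem_iUnion.1 (hDhat_union ▸ hx)
  obtain ⟨j, hj⟩ := mem_iUnion.1 (hDhat_union ▸ hy)
  rw [sum_indicator_eq_of_mem hDhat_disj hi, sum_indicator_eq_of_mem hDhat_disj hj] at hxy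
  exact hDhat_order i j (hc_mono.lt_iff_lt.1 hxy) x hi y hj
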